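/- arXiv:2311.03096 — 7 statements merged into one kernel-verified Lean document; each statement's English description precedes it below -/
import Mathlib

section
/- The weight-sharing regularizer R(w) equals the pointwise maximum over all permutations π of the linear functions h_π(w) = (1/(d-1)) * Σ_{i=1}^d (2i - d - 1) * w_{π(i)}. -/
noncomputable def R (d : ℕ) (w : Fin d → ℝ) : ℝ :=
  (1 / ((d : ℝ) - 1)) * ∑ i : Fin d, ∑ j : Fin d, if j < i then |w i - w j| else 0

noncomputable def h (d : ℕ) (π : Equiv.Perm (Fin d)) (w : Fin d → ℝ) : ℝ :=
  (1 / ((d : ℝ) - 1)) * ∑ i : Fin d, (2 * ((i : ℕ) : ℝ) + 1 - (d : ℝ)) * w (π i)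

-- shear lemma
lemma shear (d : ℕ) (v : Fin d → ℝ) :
    ∑ i : Fin d, ∑ j : Fin d, (if j < i then v i - v j else 0)
      = ∑ i : Fin d, (2 * ((i : ℕ) : ℝ) + 1 - (d : ℝ)) * v i := by
  have h1 : ∀ i : Fin d, ∑ j : Fin d, (if j < i then v i else 0) = ((i : ℕ) : ℝ) * v i := by
    intro i
    rw [← Finset.sum_filter]
    have : Finset.filter (fun j => j < i) Finset.univ = Finset.Iio i := by ext j; simp
    rw [this, Finset.sum_const, Fin.card_Iio, nsmul_eq_mul]
  have h2 : ∀ j : Fin d, ∑ i : Fin d, (if j < i then v j else 0)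
      = ((d : ℝ) - 1 - ((j : ℕ) : ℝ)) * v j := by
    intro j
    rw [← Finset.sum_filter]
    have : Finset.filter (fun i => j < i) Finset.univ = Finset.Ioi j := by ext i; simp
    rw [this, Finset.sum_const, Fin.card_Ioi, nsmul_eq_mul]
    congr 1
    have hj : (j : ℕ) + 1 ≤ d := j.2
    push_cast [Nat.cast_sub (by omega : 1 + (j:ℕ) ≤ d), Nat.sub_sub]
    ring
  have : ∑ i : Fin d, ∑ j : Fin d, (if j < i then v i - v j else 0)
      = (∑ i : Fin d, ∑ j : Fin d, (if j < i then v i else 0))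
        - ∑ i : Fin d, ∑ j : Fin d, (if j < i then v j else 0) := by
    rw [← Finset.sum_sub_distrib]
    congr 1; ext i
    rw [← Finset.sum_sub_distrib]
    congr 1; ext j
    split <;> simp
  rw [this, Finset.sum_comm (f := fun i j => if j < i then v j else 0)]
  rw [Finset.sum_congr rfl (fun i _ => h1 i), Finset.sum_congr rfl (fun j _ => h2 j),
    ← Finset.sum_sub_distrib]
  congr 1; ext i; ring

lemma D_perm (d : ℕ) (w : Fin d → ℝ) (π : Equiv.Perm (Fin d)) :
    ∑ i : Fin d, ∑ j : Fin d, |w (π i) - w (π j)| = ∑ i : Fin d, ∑ j : Fin d, |w i - w j| := by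
  rw [← Equiv.sum_comp π (fun i => ∑ j : Fin d, |w i - w j|)]
  congr 1; ext i
  exact Equiv.sum_comp π (fun j => |w (π i) - w j|)

lemma S_half (d : ℕ) (w : Fin d → ℝ) :
    ∑ i : Fin d, ∑ j : Fin d, (if j < i then |w i - w j| else 0)
      = (1 / 2) * ∑ i : Fin d, ∑ j : Fin d, |w i - w j| := by
  have key : ∑ i : Fin d, ∑ j : Fin d, |w i - w j|
      = (∑ i : Fin d, ∑ j : Fin d, (if j < i then |w i - w j| else 0))
        + ∑ i : Fin d, ∑ j : Fin d, (if i < j then |w i - w j| else 0) := by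
    rw [← Finset.sum_add_distrib]
    congr 1; ext i
    rw [← Finset.sum_add_distrib]
    congr 1; ext j
    rcases lt_trichotomy j i with hlt | heq | hgt
    · simp [hlt, not_lt_of_gt hlt]
    · simp [heq]
    · simp [hgt, not_lt_of_gt hgt]
  have sym : ∑ i : Fin d, ∑ j : Fin d, (if i < j then |w i - w j| else 0)
      = ∑ i : Fin d, ∑ j : Fin d, (if j < i then |w i - w j| else 0) := by
    rw [Finset.sum_comm]
    congr 1; ext i; congr 1; ext j
    rw [abs_sub_comm]
  rw [sym] at key
  linarith

lemma T_le_S (d : ℕ) (w : Fin d → ℝ) (π : Equiv.Perm (Fin d)) :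
    ∑ i : Fin d, (2 * ((i : ℕ) : ℝ) + 1 - (d : ℝ)) * w (π i)
      ≤ ∑ i : Fin d, ∑ j : Fin d, (if j < i then |w i - w j| else 0) := by
  rw [← shear d (fun i => w (π i))]
  calc ∑ i : Fin d, ∑ j : Fin d, (if j < i then w (π i) - w (π j) else 0)
      ≤ ∑ i : Fin d, ∑ j : Fin d, (if j < i then |w (π i) - w (π j)| else 0) := by
        apply Finset.sum_le_sum; intro i _
        apply Finset.sum_le_sum; intro j _
        split
        · exact le_abs_self _
        · exact le_refl 0
    _ = (1 / 2) * ∑ i : Fin d, ∑ j : Fin d, |w (π i) - w (π j)| := S_half d (fun i => w (π i))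
    _ = (1 / 2) * ∑ i : Fin d, ∑ j : Fin d, |w i - w j| := by rw [D_perm]
    _ = ∑ i : Fin d, ∑ j : Fin d, (if j < i then |w i - w j| else 0) := (S_half d w).symm

lemma T_sort (d : ℕ) (w : Fin d → ℝ) :
    ∑ i : Fin d, (2 * ((i : ℕ) : ℝ) + 1 - (d : ℝ)) * w (Tuple.sort w i)
      = ∑ i : Fin d, ∑ j : Fin d, (if j < i then |w i - w j| else 0) := by
  set π := Tuple.sort w
  have hm : Monotone (w ∘ π) := Tuple.monotone_sort w
  rw [← shear d (fun i => w (π i))]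
  have : ∑ i : Fin d, ∑ j : Fin d, (if j < i then w (π i) - w (π j) else 0)
      = ∑ i : Fin d, ∑ j : Fin d, (if j < i then |w (π i) - w (π j)| else 0) := by
    congr 1; ext i; congr 1; ext j
    split_ifs with hji
    · rw [abs_of_nonneg (by simpa using sub_nonneg.mpr (hm hji.le))]
    · rfl
  rw [this, S_half d (fun i => w (π i)), D_perm, ← S_half d w]

theorem stmt1 {d : ℕ} (hd : 2 ≤ d) (w : Fin d → ℝ) :
    R d w = (Finset.univ : Finset (Equiv.Perm (Fin d))).sup' Finset.univ_nonempty
      (fun π => h d π w) := by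
  have hc : (0 : ℝ) < 1 / ((d : ℝ) - 1) := by
    have h2 : (2 : ℝ) ≤ (d : ℝ) := by exact_mod_cast hd
    have : (0:ℝ) < (d:ℝ) - 1 := by linarith
    positivity
  apply le_antisymm
  · apply Finset.le_sup'_of_le (fun π => h d π w)
      (Finset.mem_univ (Tuple.sort w))
    unfold R h
    rw [T_sort d w]
  · apply Finset.sup'_le
    intro π _
    unfold R h
    exact mul_le_mul_of_nonneg_left (T_le_S d w π) hc.le
end

section
/- For β > 0 and x ∈ ℝ^d, prox_{R + β·ℓ1}(x) = prox_{β·ℓ1}(prox_R(x)), where ℓ1(w) = Σ_i |w_i| and R is the weight-sharing regularizer. -/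
open scoped InnerProductSpace

theorem ConvexOn.sum {𝕜 E β ι : Type*} [Semiring 𝕜] [PartialOrder 𝕜] [AddCommMonoid E]
    [AddCommMonoid β] [PartialOrder β] [IsOrderedAddMonoid β] [SMul 𝕜 E] [Module 𝕜 β]
    {t : Set E} (ht : Convex 𝕜 t) {s : Finset ι} {f : ι → E → β}
    (hf : ∀ i ∈ s, ConvexOn 𝕜 t (f i)) : ConvexOn 𝕜 t fun x => ∑ i ∈ s, f i x := by
  classical
  induction s using Finset.induction_on with
  | empty => simpa using convexOn_const 0 ht
  | insert a s ha ih =>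
    simp only [Finset.sum_insert ha]
    exact (hf a (Finset.mem_insert_self a s)).add
      (ih fun i hi => hf i (Finset.mem_insert_of_mem hi))

theorem convexOn_abs_comp_linearMap {E : Type*} [AddCommGroup E] [Module ℝ E]
    (g : E →ₗ[ℝ] ℝ) : ConvexOn ℝ Set.univ fun x => |g x| :=
  (convexOn_norm convex_univ).comp_linearMap g

section InnerProductSpace

variable {E : Type*} [NormedAddCommGroup E] [InnerProductSpace ℝ E]

open Filter Topology in
theorem ConvexOn.add_inner_le_of_forall_le {f : E → ℝ} (hf : ConvexOn ℝ Set.univ f) {x u : E}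
    (hu : ∀ v, f u + ‖u - x‖ ^ 2 / 2 ≤ f v + ‖v - x‖ ^ 2 / 2) (v : E) :
    f u + ⟪x - u, v - u⟫_ℝ ≤ f v := by
  set c := f u + ⟪x - u, v - u⟫_ℝ - f v
  have hsmall : ∀ t : ℝ, 0 < t → t ≤ 1 → c ≤ t * (‖v - u‖ ^ 2 / 2) := by
    intro t ht0 ht1
    have hconv : f ((1 - t) • u + t • v) ≤ (1 - t) * f u + t * f v :=
      hf.2 (Set.mem_univ u) (Set.mem_univ v) (by linarith) ht0.le (by ring)
    have hnorm : ‖(1 - t) • u + t • v - x‖ ^ 2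
        = ‖u - x‖ ^ 2 - 2 * t * ⟪x - u, v - u⟫_ℝ + t ^ 2 * ‖v - u‖ ^ 2 := by
      rw [show (1 - t) • u + t • v - x = (u - x) + t • (v - u) by module, norm_add_sq_real,
        inner_smul_right, norm_smul, mul_pow, Real.norm_eq_abs, sq_abs,
        ← neg_sub x u, inner_neg_left]
      ring
    have hmin := hu ((1 - t) • u + t • v)
    rw [hnorm] at hmin
    have hscaled : t * c ≤ t * (t * (‖v - u‖ ^ 2 / 2)) := by nlinarith
    exact le_of_mul_le_mul_left hscaled ht0
  have hlim : Tendsto (fun t : ℝ => t * (‖v - u‖ ^ 2 / 2)) (𝓝[>] 0) (𝓝 0) := by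
    simpa using (tendsto_nhdsWithin_of_tendsto_nhds (tendsto_id (x := 𝓝 (0 : ℝ)))).mul_const
      (‖v - u‖ ^ 2 / 2)
  have hc : c ≤ 0 := ge_of_tendsto hlim <| by
    filter_upwards [Ioo_mem_nhdsGT one_pos] with t ht using hsmall t ht.1 ht.2.le
  linarith

end InnerProductSpace

section Coordinates

variable {ι : Type*} [Fintype ι]

/-- `IsProx f x u` says `u = prox_f x` for the Euclidean norm on `ι → ℝ`. -/
def IsProx (f : (ι → ℝ) → ℝ) (x u : ι → ℝ) : Prop :=
  ∀ v, f u + (1 / 2) * ∑ i, (u i - x i) ^ 2 ≤ f v + (1 / 2) * ∑ i, (v i - x i) ^ 2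

theorem IsProx.add_sum_mul_le {f : (ι → ℝ) → ℝ} (hf : ConvexOn ℝ Set.univ f) {x u : ι → ℝ}
    (hu : IsProx f x u) (v : ι → ℝ) : f u + ∑ i, (x i - u i) * (v i - u i) ≤ f v := by
  let e := WithLp.linearEquiv 2 ℝ (ι → ℝ)
  have hnorm : ∀ w z : WithLp 2 (ι → ℝ),
      ‖w - z‖ ^ 2 / 2 = (1 / 2) * ∑ i, (e w i - e z i) ^ 2 := by
    intro w z
    simp only [e, EuclideanSpace.norm_sq_eq, PiLp.sub_apply, Real.norm_eq_abs, sq_abs,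
      WithLp.linearEquiv_apply, AddEquiv.toEquiv_eq_coe, Equiv.toFun_as_coe, EquivLike.coe_coe,
      WithLp.addEquiv_apply]
    ring
  have := (hf.comp_linearMap e.toLinearMap).add_inner_le_of_forall_le (x := e.symm x)
    (u := e.symm u) (fun w => by
      simpa only [hnorm, Function.comp_apply, LinearEquiv.coe_coe, e.apply_symm_apply]
        using hu (e w)) (e.symm v)
  simpa [e, PiLp.inner_apply, mul_comm] using this

theorem IsProx.sq_sub_le_mul_sub {f : (ι → ℝ) → ℝ} (hf : ConvexOn ℝ Set.univ f)
    (hperm : ∀ (σ : Equiv.Perm ι) (v : ι → ℝ), f (v ∘ σ) = f v) {x u : ι → ℝ}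
    (hu : IsProx f x u) (i j : ι) : (u i - u j) ^ 2 ≤ (x i - x j) * (u i - u j) := by
  classical
  rcases eq_or_ne i j with rfl | hij
  · simp
  have h := hu.add_sum_mul_le hf (u ∘ Equiv.swap i j)
  rw [hperm, Finset.sum_eq_add i j hij
    (fun k _ hk => by simp [Equiv.swap_apply_of_ne_of_ne hk.1 hk.2]) (by simp) (by simp)] at h
  simp only [Function.comp_apply, Equiv.swap_apply_left, Equiv.swap_apply_right] at h
  nlinarith

theorem IsProx.add_of_le {f g : (ι → ℝ) → ℝ} (hf : ConvexOn ℝ Set.univ f) {x u w : ι → ℝ}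
    (hu : IsProx f x u) (hfw : f w ≤ f u + ∑ i, (x i - u i) * (w i - u i))
    (hw : IsProx g u w) : IsProx (fun v => f v + g v) x w := by
  have hexpand : ∀ v : ι → ℝ, ∑ i, (v i - x i) ^ 2
      = ∑ i, (v i - u i) ^ 2 - 2 * ∑ i, (x i - u i) * (v i - u i) + ∑ i, (u i - x i) ^ 2 := by
    intro v
    rw [Finset.mul_sum, ← Finset.sum_sub_distrib, ← Finset.sum_add_distrib]
    exact Finset.sum_congr rfl fun i _ => by ring
  intro v
  have hsub := hu.add_sum_mul_le hf v
  have hwv := hw v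
  dsimp only
  linarith [hexpand v, hexpand w]

theorem convexOn_const_mul_sum_abs {β : ℝ} (hβ : 0 ≤ β) :
    ConvexOn ℝ Set.univ fun v : ι → ℝ => β * ∑ i, |v i| :=
  (ConvexOn.sum convex_univ fun i _ =>
    convexOn_abs_comp_linearMap (LinearMap.proj (R := ℝ) (φ := fun _ => ℝ) i)).smul hβ

end Coordinates

theorem convexOn_R (d : ℕ) : ConvexOn ℝ Set.univ (R d) := by
  rcases Nat.eq_zero_or_pos d with rfl | hd
  · have hR0 : R 0 = fun _ => 0 := funext fun w => by simp [R]
    exact hR0 ▸ convexOn_const 0 convex_univ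
  have hc : 0 ≤ 1 / ((d : ℝ) - 1) := by
    have : (1 : ℝ) ≤ d := by exact_mod_cast hd
    exact one_div_nonneg.2 (by linarith)
  have hterm : ∀ i j : Fin d,
      ConvexOn ℝ Set.univ fun w : Fin d → ℝ => if j < i then |w i - w j| else 0 := by
    intro i j
    by_cases hji : j < i
    · simp only [hji, if_true]
      exact convexOn_abs_comp_linearMap
        (LinearMap.proj (R := ℝ) (φ := fun _ => ℝ) i - LinearMap.proj j)
    · simpa only [hji, if_false] using convexOn_const (0 : ℝ) convex_univ
  exact (ConvexOn.sum convex_univ fun i _ => ConvexOn.sum convex_univ fun j _ => hterm i j).smul hc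

theorem R_add_of_comonotone {d : ℕ} {a b : Fin d → ℝ}
    (hab : ∀ i j, 0 ≤ (a i - a j) * (b i - b j)) : R d (a + b) = R d a + R d b := by
  simp only [R, ← mul_add, ← Finset.sum_add_distrib, ← ite_add_zero]
  congr 1
  refine Finset.sum_congr rfl fun i _ => Finset.sum_congr rfl fun j _ => ?_
  rw [Pi.add_apply, Pi.add_apply, add_sub_add_comm,
    (abs_add_eq_add_abs_iff _ _).2 (mul_nonneg_iff.1 (hab i j))]

theorem R_le_add_sum_mul_of_sq_sub_le {d : ℕ} {x u w : Fin d → ℝ} (hu : IsProx (R d) x u)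
    (hw : ∀ i j, (w i - w j) ^ 2 ≤ (u i - u j) * (w i - w j)) :
    R d w ≤ R d u + ∑ i, (x i - u i) * (w i - u i) := by
  have hsplit : R d w + R d (u + u - w) = R d u + R d u := by
    rw [← R_add_of_comonotone, ← R_add_of_comonotone, add_sub_cancel]
    · exact fun i j => mul_self_nonneg _
    · intro i j
      simp only [Pi.sub_apply, Pi.add_apply]
      nlinarith [hw i j]
  have hsub := hu.add_sum_mul_le (convexOn_R d) (u + u - w)
  have hsum : ∑ i, (x i - u i) * ((u + u - w) i - u i) = -∑ i, (x i - u i) * (w i - u i) := by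
    rw [← Finset.sum_neg_distrib]
    exact Finset.sum_congr rfl fun i _ => by simp only [Pi.sub_apply, Pi.add_apply]; ring
  linarith

theorem stmt9_general {d : ℕ} (β : ℝ) (hβ : 0 < β)
    (x u1 u2 : Fin d → ℝ)
    (hu1 : ∀ v : Fin d → ℝ,
      R d u1 + (1/2) * ∑ i, (u1 i - x i)^2 ≤ R d v + (1/2) * ∑ i, (v i - x i)^2)
    (hu2 : ∀ v : Fin d → ℝ,
      β * ∑ i, |u2 i| + (1/2) * ∑ i, (u2 i - u1 i)^2 ≤
        β * ∑ i, |v i| + (1/2) * ∑ i, (v i - u1 i)^2) :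
    ∀ v : Fin d → ℝ,
      R d u2 + β * ∑ i, |u2 i| + (1/2) * ∑ i, (u2 i - x i)^2 ≤
        R d v + β * ∑ i, |v i| + (1/2) * ∑ i, (v i - x i)^2 := by
  have hfirm : ∀ i j, (u2 i - u2 j) ^ 2 ≤ (u1 i - u1 j) * (u2 i - u2 j) :=
    IsProx.sq_sub_le_mul_sub (convexOn_const_mul_sum_abs hβ.le)
      (fun σ v => by simp only [Function.comp_apply, Equiv.sum_comp σ fun i => |v i|]) hu2
  exact IsProx.add_of_le (g := fun v => β * ∑ i, |v i|) (convexOn_R d) hu1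
    (R_le_add_sum_mul_of_sq_sub_le hu1 hfirm) hu2

theorem stmt9 {d : ℕ} (hd : 2 ≤ d) (β : ℝ) (hβ : 0 < β)
    (x u1 u2 : Fin d → ℝ)
    (hu1 : ∀ v : Fin d → ℝ,
      R d u1 + (1/2) * ∑ i, (u1 i - x i)^2 ≤ R d v + (1/2) * ∑ i, (v i - x i)^2)
    (hu2 : ∀ v : Fin d → ℝ,
      β * ∑ i, |u2 i| + (1/2) * ∑ i, (u2 i - u1 i)^2 ≤
        β * ∑ i, |v i| + (1/2) * ∑ i, (v i - u1 i)^2) :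
    ∀ v : Fin d → ℝ,
      R d u2 + β * ∑ i, |u2 i| + (1/2) * ∑ i, (u2 i - x i)^2 ≤
        R d v + β * ∑ i, |v i| + (1/2) * ∑ i, (v i - x i)^2 :=
  stmt9_general β hβ x u1 u2 hu1 hu2
end

section
/- If x_i = x_j for a vector x ∈ ℝ^d, then any subgradient of R obtained by averaging the gradients ∇h_π over all permutations π that sort x has equal i-th and j-th components. -/
theorem stmt11 {d : ℕ} (hd : 2 ≤ d) (x : Fin d → ℝ) (i j : Fin d) (hij : x i = x j)
    (S : Finset (Equiv.Perm (Fin d)))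
    (hSmem : ∀ π : Equiv.Perm (Fin d), π ∈ S ↔ Monotone (x ∘ π))
    (g : Fin d → ℝ)
    (hg : ∀ k : Fin d, g k = (1 / (S.card : ℝ)) *
      ∑ π ∈ S, (1 / ((d : ℝ) - 1)) * (2 * ((π.symm k : ℕ) : ℝ) + 1 - (d : ℝ))) :
    g i = g j := by
  have hx : x ∘ (Equiv.swap i j) = x := by
    funext k
    simp only [Function.comp_apply]
    rcases eq_or_ne k i with rfl | hki
    · simp [Equiv.swap_apply_left, hij]
    rcases eq_or_ne k j with rfl | hkj
    · simp [Equiv.swap_apply_right, hij]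
    · rw [Equiv.swap_apply_of_ne_of_ne hki hkj]
  have hmem : ∀ π : Equiv.Perm (Fin d), π ∈ S → (Equiv.swap i j) * π ∈ S := by
    intro π hπ
    rw [hSmem] at hπ ⊢
    have : x ∘ ⇑((Equiv.swap i j) * π) = x ∘ π := by
      rw [Equiv.Perm.coe_mul, ← Function.comp_assoc, hx]
    rw [this]; exact hπ
  have key : ∑ π ∈ S, (1 / ((d : ℝ) - 1)) * (2 * ((π.symm i : ℕ) : ℝ) + 1 - (d : ℝ))
      = ∑ π ∈ S, (1 / ((d : ℝ) - 1)) * (2 * ((π.symm j : ℕ) : ℝ) + 1 - (d : ℝ)) := by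
    apply Finset.sum_nbij' (fun π => (Equiv.swap i j) * π) (fun π => (Equiv.swap i j) * π)
    · exact hmem
    · exact hmem
    · intro π _; simp [← mul_assoc]
    · intro π _; simp [← mul_assoc]
    · intro π _
      have : ((Equiv.swap i j) * π).symm j = π.symm i := by
        simp [Equiv.Perm.mul_def, Equiv.symm_trans_apply, Equiv.swap_apply_right]
      rw [this]
  rw [hg i, hg j, key]
end

section
/- Consider the sticky-particle / pool-adjacent-violators system: particles i = 1,…,d with unit mass, initial positions x_1 ≤ … ≤ x_d and targets y_i = x_i + v_i. The final position of particle 1 equals min_{1 ≤ j ≤ d} avg(y_1,…,y_j), and particle 1 ends up merged with particle i if and only if i ≤ argmin_j avg(y_{1:j}). -/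
/-!
The isotonic fit `u` is the nearest point to `y` in the convex cone of monotone vectors, so
`⟪w, u - y⟫ ≥ 0` for every direction `w` along which `u` can be moved a little while staying
monotone. Lowering a prefix `Iic j` is always admissible, so `∑_{i ≤ j} u i ≤ ∑_{i ≤ j} y i`;
raising the prefix up to a strict jump of `u` is admissible for small steps, so there the two
sums agree. Applied to the block on which `u` equals its minimum `u 0`, this shows that every
prefix average of `y` is at least `u 0`, with equality at the end of the block and strict
inequality after it.
-/
open Filter Topology Finset RealInnerProductSpace

section FirstOrderCondition

variable {E : Type*} [NormedAddCommGroup E] [InnerProductSpace ℝ E]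

theorem inner_sub_nonneg_of_forall_norm_sub_le {S : Set E} {u y w : E}
    (hmin : ∀ v ∈ S, ‖u - y‖ ≤ ‖v - y‖) (hw : ∀ᶠ t in 𝓝[>] (0 : ℝ), u + t • w ∈ S) :
    0 ≤ ⟪w, u - y⟫ := by
  have hdiff_quot : ∀ᶠ t in 𝓝[>] (0 : ℝ), 0 ≤ 2 * ⟪w, u - y⟫ + t * ‖w‖ ^ 2 := by
    filter_upwards [hw, self_mem_nhdsWithin] with t hS (ht : 0 < t)
    have hexp : ‖u + t • w - y‖ ^ 2 = ‖u - y‖ ^ 2 + t * (2 * ⟪w, u - y⟫ + t * ‖w‖ ^ 2) := by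
      rw [add_sub_right_comm, norm_add_sq_real, real_inner_smul_right, norm_smul,
        real_inner_comm, mul_pow, Real.norm_eq_abs, sq_abs]
      ring
    have := pow_le_pow_left₀ (norm_nonneg _) (hmin _ hS) 2
    rw [hexp] at this
    exact nonneg_of_mul_nonneg_right (by linarith) ht
  have hlim : Tendsto (fun t : ℝ => 2 * ⟪w, u - y⟫ + t * ‖w‖ ^ 2) (𝓝[>] 0)
      (𝓝 (2 * ⟪w, u - y⟫)) := by
    refine tendsto_nhdsWithin_of_tendsto_nhds ?_
    simpa using ((continuous_id.mul continuous_const).const_add (2 * ⟪w, u - y⟫)).tendsto 0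
  linarith [ge_of_tendsto hlim hdiff_quot]

end FirstOrderCondition

def IsIsotonicFit {ι : Type*} [Fintype ι] [Preorder ι] (y u : ι → ℝ) : Prop :=
  Monotone u ∧ ∀ v : ι → ℝ, Monotone v → ∑ i, (u i - y i) ^ 2 ≤ ∑ i, (v i - y i) ^ 2

namespace IsIsotonicFit

variable {ι : Type*} [Fintype ι] {y u : ι → ℝ}

theorem sum_mul_sub_nonneg [Preorder ι] (hfit : IsIsotonicFit y u) {w : ι → ℝ}
    (hw : ∀ᶠ t in 𝓝[>] (0 : ℝ), Monotone (u + t • w)) :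
    0 ≤ ∑ i, w i * (u i - y i) := by
  have key := inner_sub_nonneg_of_forall_norm_sub_le
    (S := {v : EuclideanSpace ℝ ι | Monotone v.ofLp}) (u := WithLp.toLp 2 u)
    (y := WithLp.toLp 2 y) (w := WithLp.toLp 2 w) ?_ hw
  · simpa [PiLp.inner_apply, mul_comm] using key
  · intro v hv
    rw [← sq_le_sq₀ (norm_nonneg _) (norm_nonneg _), EuclideanSpace.real_norm_sq_eq,
      EuclideanSpace.real_norm_sq_eq]
    exact hfit.2 _ hv

theorem sum_Iic_le [Preorder ι] [LocallyFiniteOrderBot ι] (hfit : IsIsotonicFit y u) (j : ι) :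
    ∑ i ∈ Iic j, u i ≤ ∑ i ∈ Iic j, y i := by
  classical
  have hmono : ∀ t : ℝ, 0 < t → Monotone (u + t • fun i => if i ≤ j then -1 else 0) := by
    intro t ht i₁ i₂ hi
    have hu := hfit.1 hi
    by_cases h₂ : i₂ ≤ j
    · simp [hi.trans h₂, h₂, hu]
    · by_cases h₁ : i₁ ≤ j <;> simp [h₁, h₂] <;> linarith
  have key := hfit.sum_mul_sub_nonneg (eventually_nhdsWithin_of_forall hmono)
  simp only [ite_mul, neg_one_mul, zero_mul, ← sum_filter, filter_ge_eq_Iic, sum_neg_distrib,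
    sum_sub_distrib] at key
  linarith

theorem sum_Iic_eq_of_lt [LinearOrder ι] [LocallyFiniteOrderBot ι] (hfit : IsIsotonicFit y u)
    {j : ι} (hj : ∀ i, j < i → u j < u i) : ∑ i ∈ Iic j, u i = ∑ i ∈ Iic j, y i := by
  have hgap : ∀ᶠ t in 𝓝[>] (0 : ℝ), ∀ i, j < i → u j + t ≤ u i := by
    refine eventually_all.2 fun i => ?_
    by_cases hi : j < i
    · filter_upwards [(eventually_lt_nhds (sub_pos.2 (hj i hi))).filter_mono nhdsWithin_le_nhds]
        with t ht _
      linarith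
    · exact .of_forall fun _ h => absurd h hi
  have hmono : ∀ᶠ t in 𝓝[>] (0 : ℝ), Monotone (u + t • fun i => if i ≤ j then 1 else 0) := by
    filter_upwards [hgap] with t ht i₁ i₂ hi
    have hu := hfit.1 hi
    by_cases h₂ : i₂ ≤ j
    · simp [hi.trans h₂, h₂, hu]
    · by_cases h₁ : i₁ ≤ j
      · simp only [Pi.add_apply, Pi.smul_apply, h₁, h₂, if_true, if_false, smul_eq_mul]
        linarith [hfit.1 h₁, ht i₂ (lt_of_not_ge h₂)]
      · simp [h₁, h₂, hu]
  have key := hfit.sum_mul_sub_nonneg hmono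
  simp only [ite_mul, one_mul, zero_mul, ← sum_filter, filter_ge_eq_Iic, sum_sub_distrib] at key
  exact le_antisymm (hfit.sum_Iic_le j) (by linarith)

theorem le_sum_Iic_div_card [Preorder ι] [LocallyFiniteOrderBot ι] (hfit : IsIsotonicFit y u)
    {c : ℝ} (hc : ∀ i, c ≤ u i) (j : ι) : c ≤ (∑ i ∈ Iic j, y i) / #(Iic j) := by
  rw [le_div_iff₀ (Nat.cast_pos.2 (card_pos.2 nonempty_Iic))]
  have hsum_u : #(Iic j) * c ≤ ∑ i ∈ Iic j, u i := by
    simpa using card_nsmul_le_sum (Iic j) u c fun i _ => hc i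
  linarith [hfit.sum_Iic_le j]

theorem lt_sum_Iic_div_card [Preorder ι] [LocallyFiniteOrderBot ι] (hfit : IsIsotonicFit y u)
    {c : ℝ} (hc : ∀ i, c ≤ u i) {j : ι} (hj : c < u j) : c < (∑ i ∈ Iic j, y i) / #(Iic j) := by
  rw [lt_div_iff₀ (Nat.cast_pos.2 (card_pos.2 nonempty_Iic))]
  have hsum_u : #(Iic j) * c < ∑ i ∈ Iic j, u i := by
    simpa using sum_lt_sum (fun i _ => hc i) ⟨j, mem_Iic.2 le_rfl, hj⟩
  linarith [hfit.sum_Iic_le j]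

end IsIsotonicFit

theorem stmt12 {d : ℕ} (hd : 0 < d) (y u : Fin d → ℝ)
    (hu : Monotone u)
    (hmin : ∀ v : Fin d → ℝ, Monotone v →
      ∑ i, (u i - y i)^2 ≤ ∑ i, (v i - y i)^2)
    (A : Fin d → ℝ)
    (hA : ∀ j, A j = (∑ k ∈ Finset.Iic j, y k) / ((Finset.Iic j).card : ℝ)) :
    IsLeast (Set.range A) (u ⟨0, hd⟩) ∧
    ∃ jstar : Fin d, A jstar = u ⟨0, hd⟩ ∧
      (∀ j, A j = u ⟨0, hd⟩ → j ≤ jstar) ∧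
      (∀ i : Fin d, u i = u ⟨0, hd⟩ ↔ i ≤ jstar) := by
  have hfit : IsIsotonicFit y u := ⟨hu, hmin⟩
  set c := u ⟨0, hd⟩
  have hc : ∀ i, c ≤ u i := fun i => hu (Nat.zero_le i.val)
  obtain ⟨m, hm, hm_max⟩ : ∃ m, u m = c ∧ ∀ i, u i = c → i ≤ m := by
    have hne : (univ.filter (u · = c)).Nonempty := ⟨⟨0, hd⟩, by simp [c]⟩
    exact ⟨_, (mem_filter.1 (max'_mem _ hne)).2, fun i hi => le_max' _ i (by simpa using hi)⟩
  have hu_eq : ∀ i, u i = c ↔ i ≤ m := fun i => ⟨hm_max i, fun h => le_antisymm (hm ▸ hu h) (hc i)⟩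
  have hA_ge : ∀ j, c ≤ A j := fun j => hA j ▸ hfit.le_sum_Iic_div_card hc j
  have hA_m : A m = c := by
    have hjump : ∀ i, m < i → u m < u i := fun i hi =>
      hm ▸ (hc i).lt_of_ne fun h => hi.not_ge (hm_max i h.symm)
    rw [hA, ← hfit.sum_Iic_eq_of_lt hjump, sum_congr rfl fun i hi => (hu_eq i).2 (mem_Iic.1 hi),
      sum_const, nsmul_eq_mul]
    exact mul_div_cancel_left₀ _ (Nat.cast_pos.2 (card_pos.2 nonempty_Iic)).ne'
  have hA_gt : ∀ j, m < j → c < A j := fun j hj =>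
    hA j ▸ hfit.lt_sum_Iic_div_card hc ((hc j).lt_of_ne fun h => hj.not_ge (hm_max j h.symm))
  refine ⟨⟨⟨m, hA_m⟩, Set.forall_mem_range.2 hA_ge⟩, m, hA_m, fun j hj => ?_, hu_eq⟩
  exact not_lt.1 fun hmj => (hA_gt j hmj).ne' hj
end

section
/- Neighbour collision criterion for isotonic regression: the optimal isotonic fit x* of y satisfies x*_i = x*_{i+1} if and only if max_{j ≤ i} avg(y_{j:i}) ≥ min_{j ≥ i+1} avg(y_{i+1:j}). -/
/-!
Optimality of `x` gives first-order conditions on the residuals `x - y`. Adding `-t • 1_S` to `x`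
(`t > 0`) keeps it monotone when `S` is a lower set, and adding `t • 1_S` keeps it monotone for
small `t > 0` when `x` jumps up across the boundary of `S`; the squared error changes by
`t (∓2 ∑_S (x - y) + t #S)`. So the residuals sum to `≤ 0` over every lower set, and to `0` over a
lower set across whose boundary `x` jumps.

On the maximal block `[p, q]` on which `x` is constant around an index `i`, this gives
`x i ≤ avg(y_{p:i})` and `avg(y_{i:q}) ≤ x i`, which proves the criterion when `x i = x (i + 1)`.
If instead `x i < x (i + 1)`, every average ending at `i` is `≤ x i` and every average starting
at `i + 1` is `≥ x (i + 1)`, so the maximum of the former is below the minimum of the latter.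
-/

open Finset Filter Topology
open scoped BigOperators

lemma nonneg_of_eventually_nonneg_mul {s c : ℝ}
    (h : ∀ᶠ t in 𝓝[>] (0 : ℝ), 0 ≤ t * (s + t * c)) : 0 ≤ s := by
  have hlim : Tendsto (fun t : ℝ => s + t * c) (𝓝[>] 0) (𝓝 s) := by
    have : ContinuousAt (fun t : ℝ => s + t * c) 0 := by fun_prop
    simpa using this.tendsto.mono_left nhdsWithin_le_nhds
  refine ge_of_tendsto hlim ?_
  filter_upwards [h, self_mem_nhdsWithin] with t ht htpos
  exact nonneg_of_mul_nonneg_right ht htpos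

lemma Finset.sum_Iio_add_sum_Icc {ι M : Type*} [LinearOrder ι] [LocallyFiniteOrder ι]
    [LocallyFiniteOrderBot ι] [AddCommMonoid M] (f : ι → M) {a b : ι} (h : a ≤ b) :
    ∑ k ∈ Iio a, f k + ∑ k ∈ Icc a b, f k = ∑ k ∈ Iic b, f k := by
  rw [← sum_union (disjoint_left.2 fun k hk hk' => (mem_Iio.1 hk).not_ge (mem_Icc.1 hk').1)]
  congr 1
  exact coe_injective (by push_cast; exact Set.Iio_union_Icc_eq_Iic h)

lemma Finset.expect_le_expect_of_sum_le {ι α : Type*} [AddCommMonoid α] [PartialOrder α]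
    [IsOrderedAddMonoid α] [Module ℚ≥0 α] [PosSMulMono ℚ≥0 α] {s : Finset ι} {f g : ι → α}
    (h : ∑ i ∈ s, f i ≤ ∑ i ∈ s, g i) : 𝔼 i ∈ s, f i ≤ 𝔼 i ∈ s, g i :=
  smul_le_smul_of_nonneg_left h (by positivity)

section Blocks

variable {ι β : Type*} [LinearOrder ι] [Fintype ι] [PartialOrder β] {x : ι → β}

lemma Monotone.exists_le_eq_and_lt (hx : Monotone x) (i : ι) :
    ∃ p ≤ i, x p = x i ∧ ∀ a < p, x a < x p := by
  classical
  set P := univ.filter fun k => x k = x i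
  have hi : i ∈ P := by simp [P]
  have hp : P.min' ⟨i, hi⟩ ∈ P := P.min'_mem _
  simp only [P, mem_filter, mem_univ, true_and] at hp
  refine ⟨P.min' ⟨i, hi⟩, P.min'_le i hi, hp, fun a ha => (hx ha.le).lt_of_ne fun hxa => ?_⟩
  exact ha.not_ge (P.min'_le a (by simp [P, hxa, hp]))

lemma Monotone.exists_ge_eq_and_lt (hx : Monotone x) (i : ι) :
    ∃ q ≥ i, x q = x i ∧ ∀ b > q, x q < x b := by
  classical
  set Q := univ.filter fun k => x k = x i
  have hi : i ∈ Q := by simp [Q]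
  have hq : Q.max' ⟨i, hi⟩ ∈ Q := Q.max'_mem _
  simp only [Q, mem_filter, mem_univ, true_and] at hq
  refine ⟨Q.max' ⟨i, hi⟩, Q.le_max' i hi, hq, fun b hb => (hx hb.le).lt_of_ne fun hxb => ?_⟩
  exact hb.not_ge (Q.le_max' b (by simp [Q, ← hxb, hq]))

end Blocks

def IsIsotonicRegression {ι : Type*} [Fintype ι] [Preorder ι] (y x : ι → ℝ) : Prop :=
  Monotone x ∧ ∀ v : ι → ℝ, Monotone v → ∑ i, (x i - y i) ^ 2 ≤ ∑ i, (v i - y i) ^ 2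

namespace IsIsotonicRegression

section Preorder

variable {ι : Type*} [Fintype ι] [Preorder ι] {y x : ι → ℝ}

lemma nonneg_of_monotone_add [DecidableEq ι] (h : IsIsotonicRegression y x)
    {S : Finset ι} {t : ℝ} (hm : Monotone fun k => x k + if k ∈ S then t else 0) :
    0 ≤ t * (2 * ∑ k ∈ S, (x k - y k) + t * #S) := by
  have key := h.2 _ hm
  have expand : ∀ k, (x k + (if k ∈ S then t else 0) - y k) ^ 2
      = (x k - y k) ^ 2 + if k ∈ S then t * (2 * (x k - y k) + t) else 0 := by
    intro k; split_ifs <;> ring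
  simp only [expand, sum_add_distrib, sum_ite_mem, univ_inter, ← mul_sum, sum_const,
    nsmul_eq_mul] at key
  linarith

lemma sum_sub_nonpos_of_isLowerSet (h : IsIsotonicRegression y x)
    {S : Finset ι} (hS : IsLowerSet (S : Set ι)) : ∑ k ∈ S, (x k - y k) ≤ 0 := by
  classical
  have hm : ∀ t : ℝ, 0 < t → Monotone fun k => x k + if k ∈ S then -t else 0 := by
    intro t ht a b hab
    have hxab := h.1 hab
    by_cases hb : b ∈ S
    · have ha : a ∈ S := hS hab hb
      simp only [ha, hb, if_true]
      linarith
    · simp only [hb, if_false]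
      split_ifs <;> linarith
  have := nonneg_of_eventually_nonneg_mul (s := -(2 * ∑ k ∈ S, (x k - y k))) (c := #S) <| by
    filter_upwards [self_mem_nhdsWithin] with t (ht : 0 < t)
    linarith [h.nonneg_of_monotone_add (hm t ht)]
  linarith

lemma sum_sub_nonneg_of_lt (h : IsIsotonicRegression y x)
    {S : Finset ι} (hS : ∀ a ∈ S, ∀ b ∉ S, x a < x b) : 0 ≤ ∑ k ∈ S, (x k - y k) := by
  classical
  have hgap : ∀ a b, ∀ᶠ t in 𝓝[>] (0 : ℝ), a ∈ S → b ∉ S → x a + t ≤ x b := by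
    intro a b
    by_cases hab : a ∈ S ∧ b ∉ S
    · filter_upwards [nhdsWithin_le_nhds (eventually_lt_nhds (sub_pos.2 (hS a hab.1 b hab.2)))]
        with t ht _ _
      linarith
    · exact Eventually.of_forall fun t ha hb => absurd ⟨ha, hb⟩ hab
  have := nonneg_of_eventually_nonneg_mul (s := 2 * ∑ k ∈ S, (x k - y k)) (c := #S) <| by
    filter_upwards [self_mem_nhdsWithin, eventually_all.2 fun a => eventually_all.2 (hgap a)]
      with t (ht : 0 < t) hgap
    refine h.nonneg_of_monotone_add fun a b hab => ?_
    have hxab := h.1 hab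
    by_cases ha : a ∈ S <;> by_cases hb : b ∈ S <;> simp only [ha, hb, if_true, if_false]
    · linarith
    · linarith [hgap a b ha hb]
    · linarith
    · linarith
  linarith

lemma sum_sub_eq_zero (h : IsIsotonicRegression y x)
    {S : Finset ι} (hS : IsLowerSet (S : Set ι)) (hlt : ∀ a ∈ S, ∀ b ∉ S, x a < x b) :
    ∑ k ∈ S, (x k - y k) = 0 :=
  (h.sum_sub_nonpos_of_isLowerSet hS).antisymm (h.sum_sub_nonneg_of_lt hlt)

end Preorder

section LinearOrder

variable {ι : Type*} [LinearOrder ι] [Fintype ι] [LocallyFiniteOrderBot ι] {y x : ι → ℝ}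

lemma sum_sub_Iic_nonpos (h : IsIsotonicRegression y x) (i : ι) :
    ∑ k ∈ Iic i, (x k - y k) ≤ 0 :=
  h.sum_sub_nonpos_of_isLowerSet (by simpa using isLowerSet_Iic i)

lemma sum_sub_Iio_nonpos (h : IsIsotonicRegression y x) (i : ι) :
    ∑ k ∈ Iio i, (x k - y k) ≤ 0 :=
  h.sum_sub_nonpos_of_isLowerSet (by simpa using isLowerSet_Iio i)

lemma sum_sub_Iic_eq_zero (h : IsIsotonicRegression y x) {q : ι}
    (hq : ∀ b > q, x q < x b) : ∑ k ∈ Iic q, (x k - y k) = 0 :=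
  h.sum_sub_eq_zero (by simpa using isLowerSet_Iic q) fun a ha b hb =>
    (h.1 (mem_Iic.1 ha)).trans_lt (hq b (not_le.1 (mt mem_Iic.2 hb)))

lemma sum_sub_Iio_eq_zero (h : IsIsotonicRegression y x) {p : ι}
    (hp : ∀ a < p, x a < x p) : ∑ k ∈ Iio p, (x k - y k) = 0 :=
  h.sum_sub_eq_zero (by simpa using isLowerSet_Iio p) fun a ha b hb =>
    (hp a (mem_Iio.1 ha)).trans_le (h.1 (not_lt.1 (mt mem_Iio.2 hb)))

variable [LocallyFiniteOrder ι]

lemma exists_le_expect_Icc (h : IsIsotonicRegression y x) (i : ι) :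
    ∃ p ≤ i, x i ≤ 𝔼 k ∈ Icc p i, y k := by
  obtain ⟨p, hpi, hxp, hp⟩ := h.1.exists_le_eq_and_lt i
  have hsum : ∑ k ∈ Icc p i, (x k - y k) ≤ 0 := by
    have := sum_Iio_add_sum_Icc (fun k => x k - y k) hpi
    rw [h.sum_sub_Iio_eq_zero hp, zero_add] at this
    exact this ▸ h.sum_sub_Iic_nonpos i
  rw [sum_sub_distrib, sub_nonpos] at hsum
  refine ⟨p, hpi, ?_⟩
  calc x i ≤ 𝔼 k ∈ Icc p i, x k :=
        le_expect (nonempty_Icc.2 hpi) fun k hk => hxp ▸ h.1 (mem_Icc.1 hk).1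
    _ ≤ 𝔼 k ∈ Icc p i, y k := expect_le_expect_of_sum_le hsum

lemma exists_expect_Icc_le (h : IsIsotonicRegression y x) (i : ι) :
    ∃ q ≥ i, 𝔼 k ∈ Icc i q, y k ≤ x i := by
  obtain ⟨q, hiq, hxq, hq⟩ := h.1.exists_ge_eq_and_lt i
  have hsum : 0 ≤ ∑ k ∈ Icc i q, (x k - y k) := by
    have := sum_Iio_add_sum_Icc (fun k => x k - y k) hiq
    rw [h.sum_sub_Iic_eq_zero hq] at this
    linarith [h.sum_sub_Iio_nonpos i]
  rw [sum_sub_distrib, sub_nonneg] at hsum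
  refine ⟨q, hiq, ?_⟩
  calc 𝔼 k ∈ Icc i q, y k ≤ 𝔼 k ∈ Icc i q, x k := expect_le_expect_of_sum_le hsum
    _ ≤ x i := expect_le (nonempty_Icc.2 hiq) fun k hk => hxq ▸ h.1 (mem_Icc.1 hk).2

variable {i i' : ι}

lemma expect_Icc_le_of_lt (h : IsIsotonicRegression y x) (hii' : i ⋖ i')
    (hlt : x i < x i') {j : ι} (hj : j ≤ i) : 𝔼 k ∈ Icc j i, y k ≤ x i := by
  have hsum : 0 ≤ ∑ k ∈ Icc j i, (x k - y k) := by
    have := sum_Iio_add_sum_Icc (fun k => x k - y k) hj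
    rw [h.sum_sub_Iic_eq_zero fun b hb => hlt.trans_le (h.1 (hii'.ge_of_gt hb))] at this
    linarith [h.sum_sub_Iio_nonpos j]
  rw [sum_sub_distrib, sub_nonneg] at hsum
  calc 𝔼 k ∈ Icc j i, y k ≤ 𝔼 k ∈ Icc j i, x k := expect_le_expect_of_sum_le hsum
    _ ≤ x i := expect_le (nonempty_Icc.2 hj) fun k hk => h.1 (mem_Icc.1 hk).2

lemma le_expect_Icc_of_lt (h : IsIsotonicRegression y x) (hii' : i ⋖ i')
    (hlt : x i < x i') {j : ι} (hj : i' ≤ j) : x i' ≤ 𝔼 k ∈ Icc i' j, y k := by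
  have hsum : ∑ k ∈ Icc i' j, (x k - y k) ≤ 0 := by
    have := sum_Iio_add_sum_Icc (fun k => x k - y k) hj
    rw [h.sum_sub_Iio_eq_zero fun a ha => (h.1 (hii'.le_of_lt ha)).trans_lt hlt, zero_add] at this
    exact this ▸ h.sum_sub_Iic_nonpos j
  rw [sum_sub_distrib, sub_nonpos] at hsum
  calc x i' ≤ 𝔼 k ∈ Icc i' j, x k :=
        le_expect (nonempty_Icc.2 hj) fun k hk => h.1 (mem_Icc.1 hk).1
    _ ≤ 𝔼 k ∈ Icc i' j, y k := expect_le_expect_of_sum_le hsum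

theorem eq_iff_sup_expect_ge_inf_expect [LocallyFiniteOrderTop ι]
    (h : IsIsotonicRegression y x) (hii' : i ⋖ i') :
    x i = x i' ↔
      (Iic i).sup' ⟨i, mem_Iic.2 le_rfl⟩ (fun j => 𝔼 k ∈ Icc j i, y k) ≥
        (Ici i').inf' ⟨i', mem_Ici.2 le_rfl⟩ (fun j => 𝔼 k ∈ Icc i' j, y k) := by
  constructor
  · intro heq
    obtain ⟨p, hpi, hp⟩ := h.exists_le_expect_Icc i
    obtain ⟨q, hiq, hq⟩ := h.exists_expect_Icc_le i'
    calc (Ici i').inf' _ (fun j => 𝔼 k ∈ Icc i' j, y k) ≤ 𝔼 k ∈ Icc i' q, y k :=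
          inf'_le (fun j => 𝔼 k ∈ Icc i' j, y k) (mem_Ici.2 hiq)
      _ ≤ x i := heq ▸ hq
      _ ≤ 𝔼 k ∈ Icc p i, y k := hp
      _ ≤ (Iic i).sup' _ (fun j => 𝔼 k ∈ Icc j i, y k) :=
          le_sup' (fun j => 𝔼 k ∈ Icc j i, y k) (mem_Iic.2 hpi)
  · intro hge
    by_contra hne
    have hlt : x i < x i' := (h.1 hii'.le).lt_of_ne hne
    refine hlt.not_ge <|
      (le_inf' _ _ fun j hj => ?_).trans (hge.trans (sup'_le _ _ fun j hj => ?_))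
    · exact h.le_expect_Icc_of_lt hii' hlt (mem_Ici.1 hj)
    · exact h.expect_Icc_le_of_lt hii' hlt (mem_Iic.1 hj)

end LinearOrder

end IsIsotonicRegression

theorem stmt14 {d : ℕ} (y x : Fin d → ℝ) (hx : Monotone x)
    (hmin : ∀ v : Fin d → ℝ, Monotone v →
      ∑ i, (x i - y i)^2 ≤ ∑ i, (v i - y i)^2)
    (i : Fin d) (hi : (i : ℕ) + 1 < d) :
    x i = x ⟨(i : ℕ) + 1, hi⟩ ↔
      (Finset.Iic i).sup' ⟨i, Finset.mem_Iic.2 le_rfl⟩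
          (fun j => (∑ k ∈ Finset.Icc j i, y k) / ((Finset.Icc j i).card : ℝ)) ≥
      (Finset.Ici (⟨(i : ℕ) + 1, hi⟩ : Fin d)).inf'
          ⟨⟨(i : ℕ) + 1, hi⟩, Finset.mem_Ici.2 le_rfl⟩
          (fun j => (∑ k ∈ Finset.Icc (⟨(i : ℕ) + 1, hi⟩ : Fin d) j, y k) /
            ((Finset.Icc (⟨(i : ℕ) + 1, hi⟩ : Fin d) j).card : ℝ)) := by
  have hcov : i ⋖ ⟨(i : ℕ) + 1, hi⟩ := Fin.covBy_iff.2 (Order.covBy_add_one _)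
  simpa only [expect_eq_sum_div_card] using
    IsIsotonicRegression.eq_iff_sup_expect_ge_inf_expect ⟨hx, hmin⟩ hcov
end

section
/- Pool adjacent violators merging is valid: if y_i ≥ y_{i+1}, then the isotonic regression of y equals the isotonic regression of the problem where coordinates i and i+1 are constrained to be equal. Equivalently, the optimal fit satisfies x*_i = x*_{i+1} whenever y_i ≥ y_{i+1}. -/
open Function

theorem Monotone.update_of_between {ι α : Type*} [PartialOrder ι] [DecidableEq ι] [Preorder α]
    {f : ι → α} (hf : Monotone f) {k : ι} {c : α}
    (hlo : ∀ j < k, f j ≤ c) (hhi : ∀ j, k < j → c ≤ f j) :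
    Monotone (update f k c) := by
  intro a b hab
  rcases hab.eq_or_lt with rfl | hlt
  · exact le_rfl
  by_cases ha : a = k <;> by_cases hb : b = k
  · exact absurd (ha.trans hb.symm) hlt.ne
  · subst ha
    simpa [hb] using hhi b hlt
  · subst hb
    simpa [ha] using hlo a hlt
  · simpa [ha, hb] using hf hab

theorem Finset.apply_le_apply_of_sum_le_sum_update {ι β M : Type*} [Fintype ι] [DecidableEq ι]
    [AddCommMonoid M] [PartialOrder M] [IsOrderedCancelAddMonoid M]
    (φ : ι → β → M) {x : ι → β} {k : ι} {c : β}
    (h : ∑ j, φ j (x j) ≤ ∑ j, φ j (update x k c j)) : φ k (x k) ≤ φ k c := by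
  have hrest : ∑ j ∈ Finset.univ.erase k, φ j (update x k c j) =
      ∑ j ∈ Finset.univ.erase k, φ j (x j) :=
    Finset.sum_congr rfl fun j hj => by rw [update_of_ne (Finset.ne_of_mem_erase hj)]
  rw [← Finset.add_sum_erase _ _ (Finset.mem_univ k),
    ← Finset.add_sum_erase _ _ (Finset.mem_univ k), hrest, update_self] at h
  exact le_of_add_le_add_right h

theorem isotonic_min_eq_of_covBy_of_le {ι : Type*} [Fintype ι] [LinearOrder ι]
    {y x : ι → ℝ} (hx : Monotone x)
    (hmin : ∀ v : ι → ℝ, Monotone v → ∑ j, (x j - y j) ^ 2 ≤ ∑ j, (v j - y j) ^ 2)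
    {i i' : ι} (hii' : i ⋖ i') (hy : y i' ≤ y i) : x i = x i' := by
  have hopt : ∀ k c, (∀ j < k, x j ≤ c) → (∀ j, k < j → c ≤ x j) →
      (x k - y k) ^ 2 ≤ (c - y k) ^ 2 := fun k c hlo hhi =>
    Finset.apply_le_apply_of_sum_le_sum_update (fun j t => (t - y j) ^ 2)
      (hmin _ (hx.update_of_between hlo hhi))
  refine le_antisymm (hx hii'.le) (not_lt.1 fun hlt => ?_)
  by_cases hxy : x i < y i
  · -- raise `x i` towards `y i`, staying below `x i'`
    have hc := hopt i (min (y i) (x i'))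
      (fun j hj => (hx hj.le).trans (le_min hxy.le hlt.le))
      (fun j hj => (min_le_right _ _).trans (hx (hii'.ge_of_gt hj)))
    nlinarith [min_le_left (y i) (x i'), lt_min hxy hlt]
  · -- otherwise `y i' ≤ y i ≤ x i < x i'`: lower `x i'` towards `y i'`, staying above `x i`
    have hc := hopt i' (max (y i') (x i))
      (fun j hj => (hx (hii'.le_of_lt hj)).trans (le_max_right _ _))
      (fun j hj => (max_le (by linarith) hlt.le).trans (hx hj.le))
    nlinarith [le_max_left (y i') (x i), max_lt (by linarith : y i' < x i') hlt]

theorem stmt16 {d : ℕ} (y x : Fin d → ℝ) (hx : Monotone x)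
    (hmin : ∀ v : Fin d → ℝ, Monotone v →
      ∑ i, (x i - y i)^2 ≤ ∑ i, (v i - y i)^2)
    (i : Fin d) (hi : (i : ℕ) + 1 < d) (hy : y ⟨(i : ℕ) + 1, hi⟩ ≤ y i) :
    x i = x ⟨(i : ℕ) + 1, hi⟩ :=
  isotonic_min_eq_of_covBy_of_le hx hmin (Fin.covBy_iff.2 (Nat.covBy_iff_add_one_eq.2 rfl)) hy
end

section
/- The number of tangent hyperplanes h_π that are active at w (i.e., h_π(w) = R(w)) equals the number of permutations sorting w, which is the product of the factorials of the multiplicities of the distinct values of w; in particular, h_π(w) = R(w) if and only if π sorts w (w_{π(1)} ≤ … ≤ w_{π(d)}). -/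
/-!
Write `u = w ∘ π`. The coefficient `2i + 1 - d` of `u i` is the number of `j < i` minus the
number of `j > i`, so `(d - 1) h_π(w) = ∑_{j<i} (u i - u j)`, while `(d - 1) R(w)` is the same
sum with absolute values; the latter does not depend on `π`, being half of `∑_{i,j} |w i - w j|`.
Comparing termwise, `h_π(w) = R(w)` iff `w ∘ π` is monotone, i.e. iff `w ∘ π = w ∘ σ` for a fixed
sorting permutation `σ`. These `π` form a coset of the stabiliser of `w`, whose order is the
product of the factorials of the fibre sizes of `w`.
-/

open Finset

section PairSums

variable {α : Type*} [LinearOrder α] [Fintype α]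

theorem two_mul_sum_lt_abs_sub (u : α → ℝ) :
    2 * ∑ i, ∑ j, (if j < i then |u i - u j| else 0) = ∑ i, ∑ j, |u i - u j| := by
  have hswap : ∑ i, ∑ j, (if j < i then |u i - u j| else 0)
      = ∑ i, ∑ j, (if i < j then |u i - u j| else 0) := by
    rw [sum_comm]
    simp_rw [abs_sub_comm]
  rw [two_mul]
  nth_rewrite 2 [hswap]
  simp_rw [← sum_add_distrib]
  refine sum_congr rfl fun i _ => sum_congr rfl fun j _ => ?_
  rcases lt_trichotomy j i with hji | rfl | hij
  · simp [hji, hji.not_gt]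
  · simp
  · simp [hij, hij.not_gt]

theorem sum_lt_abs_sub_comp_perm (u : α → ℝ) (π : Equiv.Perm α) :
    ∑ i, ∑ j, (if j < i then |u (π i) - u (π j)| else 0)
      = ∑ i, ∑ j, (if j < i then |u i - u j| else 0) := by
  refine mul_left_cancel₀ (two_ne_zero (α := ℝ)) ?_
  rw [two_mul_sum_lt_abs_sub, two_mul_sum_lt_abs_sub]
  exact Fintype.sum_equiv π _ _ fun i => Fintype.sum_equiv π _ _ fun j => rfl

theorem sum_lt_sub_eq_sum_lt_abs_sub_iff (u : α → ℝ) :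
    ∑ i, ∑ j, (if j < i then u i - u j else 0)
      = ∑ i, ∑ j, (if j < i then |u i - u j| else 0) ↔ Monotone u := by
  simp_rw [← Fintype.sum_prod_type']
  rw [sum_eq_sum_iff_of_le fun p _ => by split_ifs <;> simp [le_abs_self], monotone_iff_forall_lt]
  refine ⟨fun H j i hji => ?_, fun H p _ => ?_⟩
  · have hterm := H (i, j) (mem_univ _)
    simp only [if_pos hji] at hterm
    linarith [abs_eq_self.mp hterm.symm]
  · split_ifs with hp
    · exact (abs_of_nonneg (sub_nonneg.mpr (H hp))).symm
    · rfl

end PairSums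

theorem sum_lt_sub_eq_sum_weight_mul {d : ℕ} (u : Fin d → ℝ) :
    ∑ i : Fin d, ∑ j : Fin d, (if j < i then u i - u j else 0)
      = ∑ i : Fin d, (2 * ((i : ℕ) : ℝ) + 1 - (d : ℝ)) * u i := by
  have hcount : ∀ i : Fin d, ∑ j : Fin d, ((if j < i then u i else 0) - if i < j then u i else 0)
      = (2 * ((i : ℕ) : ℝ) + 1 - (d : ℝ)) * u i := by
    intro i
    rw [sum_sub_distrib, ← sum_filter, ← sum_filter, sum_const, sum_const,
      filter_gt_eq_Iio, filter_lt_eq_Ioi, Fin.card_Iio, Fin.card_Ioi, nsmul_eq_mul, nsmul_eq_mul,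
      Nat.cast_sub (Nat.le_sub_one_of_lt i.isLt), Nat.cast_sub i.pos]
    push_cast
    ring
  have hsplit : ∀ i j : Fin d, (if j < i then u i - u j else 0)
      = (if j < i then u i else 0) - if j < i then u j else 0 := fun i j => by
    split_ifs <;> simp
  simp only [hsplit, ← hcount, sum_sub_distrib]
  rw [sum_comm (f := fun i j => if j < i then u j else 0)]

theorem h_eq_R_iff_monotone {d : ℕ} (hd : 2 ≤ d) (w : Fin d → ℝ) (π : Equiv.Perm (Fin d)) :
    h d π w = R d w ↔ Monotone (w ∘ π) := by
  have hd' : (2 : ℝ) ≤ d := by exact_mod_cast hd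
  have hscale : 1 / ((d : ℝ) - 1) ≠ 0 := one_div_ne_zero (by linarith)
  rw [h, R, ← sum_lt_sub_eq_sum_weight_mul, ← sum_lt_abs_sub_comp_perm w π, mul_right_inj' hscale]
  exact sum_lt_sub_eq_sum_lt_abs_sub_iff (w ∘ π)

namespace Equiv.Perm

variable {α ι : Type*} [Fintype α] [DecidableEq α] [DecidableEq ι]

theorem card_filter_comp_eq_comp (f : α → ι) (σ : Perm α) :
    #{π : Perm α | f ∘ π = f ∘ σ} = #{τ : Perm α | f ∘ τ = f} :=
  card_equiv (Equiv.mulRight σ⁻¹) fun π => by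
    simp only [mem_filter, mem_univ, true_and, coe_mulRight, coe_mul, coe_inv]
    rw [← Function.comp_assoc, Equiv.comp_symm_eq]

theorem card_filter_comp_eq_self (f : α → ι) :
    #{τ : Perm α | f ∘ τ = f} = ∏ v ∈ univ.image f, (#{a | f a = v}).factorial := by
  rw [← Fintype.card_subtype, DomMulAct.stabilizer_card']
  simp_rw [Fintype.card_subtype]

end Equiv.Perm

open scoped Classical in
theorem stmt19 {d : ℕ} (hd : 2 ≤ d) (w : Fin d → ℝ) :
    ((Finset.univ.filter (fun π : Equiv.Perm (Fin d) => h d π w = R d w)).card =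
      ∏ v ∈ Finset.univ.image w,
        Nat.factorial (Finset.univ.filter (fun i => w i = v)).card) ∧
    (∀ π : Equiv.Perm (Fin d), h d π w = R d w ↔ Monotone (w ∘ π)) := by
  have hiff := h_eq_R_iff_monotone hd w
  refine ⟨?_, hiff⟩
  rw [filter_congr fun π _ => (hiff π).trans Tuple.comp_sort_eq_comp_iff_monotone.symm,
    Equiv.Perm.card_filter_comp_eq_comp, Equiv.Perm.card_filter_comp_eq_self]
end
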